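/- arXiv:2102.06446 — 2 statements merged into one kernel-verified Lean document; each statement's English description precedes it below -/
import Mathlib

section
/- For any configuration ω of open edges in Z^2 whose open edges form a single nonempty finite connected component with N open edges, the number ∂N of closed edges sharing at least one vertex with an open edge satisfies ∂N ≤ 2·N + 4. -/
/-- A nearest-neighbour edge of `ℤ²`: an unordered pair of vertices at `L¹`-distance 1. -/
def IsNNEdge2 (e : Sym2 (ℤ × ℤ)) : Prop :=
  ∃ x y : ℤ × ℤ, e = s(x, y) ∧ |x.1 - y.1| + |x.2 - y.2| = 1

/-- Two edges touch if they share a vertex. -/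
def Touches2 (e f : Sym2 (ℤ × ℤ)) : Prop :=
  ∃ v : ℤ × ℤ, v ∈ e ∧ v ∈ f

/-- A finite set of edges is connected if any two of its edges are linked by a chain of
edges of the set, consecutive ones sharing a vertex. -/
def EdgeConnected2 (E : Finset (Sym2 (ℤ × ℤ))) : Prop :=
  ∀ e ∈ E, ∀ f ∈ E,
    Relation.ReflTransGen (fun a b => a ∈ E ∧ b ∈ E ∧ Touches2 a b) e f

/-!
Let `V` be the set of endpoints of the open edges and `T` the set of edges with an endpoint in
`V`; it contains both the open edges and the boundary edges. Counting incidences between `V` and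
`T`, every open edge has both endpoints in `V` and every boundary edge at least one, while every
vertex of `ℤ²` lies on at most four edges, so `2N + ∂N ≤ 4|V|`. Connectedness gives
`|V| ≤ N + 1`: growing the edge set from a single edge by attaching one touching edge at a time
adds at most one new vertex per edge.
-/

open Finset

theorem Relation.ReflTransGen.exists_rel_of_not {α : Type*} {r : α → α → Prop} {p : α → Prop}
    {a b : α} (h : Relation.ReflTransGen r a b) (ha : p a) (hb : ¬p b) :
    ∃ c d, p c ∧ ¬p d ∧ r c d := by
  induction h with
  | refl => exact absurd ha hb
  | @tail c d _ hcd ih =>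
    by_cases hc : p c
    · exact ⟨c, d, hc, hb, hcd⟩
    · exact ih hc

section EdgeSets

variable {α : Type*} [DecidableEq α]

def edgeVerts (E : Finset (Sym2 α)) : Finset α := E.biUnion Sym2.toFinset

theorem mem_edgeVerts {E : Finset (Sym2 α)} {v : α} : v ∈ edgeVerts E ↔ ∃ e ∈ E, v ∈ e := by
  simp [edgeVerts, Sym2.mem_toFinset]

theorem Sym2.card_toFinset_le_two (e : Sym2 α) : #e.toFinset ≤ 2 := by
  rw [Sym2.card_toFinset]; split_ifs <;> omega

theorem card_edgeVerts_insert_le {S : Finset (Sym2 α)} {g : Sym2 α} {v : α} (hvg : v ∈ g)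
    (hvS : v ∈ edgeVerts S) : #(edgeVerts (insert g S)) ≤ #(edgeVerts S) + 1 := by
  have hnew : g.toFinset \ edgeVerts S ⊆ g.toFinset.erase v := fun w hw => by
    rw [mem_sdiff] at hw
    exact mem_erase.mpr ⟨fun hwv => hw.2 (hwv ▸ hvS), hw.1⟩
  calc #(edgeVerts (insert g S)) = #(g.toFinset \ edgeVerts S) + #(edgeVerts S) := by
        rw [edgeVerts, biUnion_insert, ← edgeVerts, card_sdiff_add_card]
    _ ≤ #(g.toFinset.erase v) + #(edgeVerts S) := by gcongr
    _ ≤ #(edgeVerts S) + 1 := by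
        rw [card_erase_of_mem (Sym2.mem_toFinset.mpr hvg)]
        have := Sym2.card_toFinset_le_two g
        omega

theorem card_edgeVerts_add_card_le_of_subset {E S : Finset (Sym2 α)} (hSE : S ⊆ E)
    (hS : S.Nonempty)
    (hgrow : ∀ S ⊂ E, S.Nonempty → ∃ g ∈ E \ S, ∃ v ∈ g, v ∈ edgeVerts S) :
    #(edgeVerts E) + #S ≤ #(edgeVerts S) + #E := by
  induction h : #(E \ S) generalizing S with
  | zero => rw [card_eq_zero, sdiff_eq_empty_iff_subset] at h; rw [hSE.antisymm h]
  | succ n ih =>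
    have hSE' : S ⊂ E := Finset.ssubset_iff_subset_ne.mpr ⟨hSE, by rintro rfl; simp at h⟩
    obtain ⟨g, hg, v, hvg, hvS⟩ := hgrow S hSE' hS
    obtain ⟨hgE, hgS⟩ := mem_sdiff.mp hg
    have hcard : #(E \ insert g S) = n := by
      rw [sdiff_insert, card_erase_of_mem hg, h, Nat.add_sub_cancel]
    have := ih (insert_subset hgE hSE) (insert_nonempty g S) hcard
    have := card_edgeVerts_insert_le hvg hvS
    rw [card_insert_of_notMem hgS] at *
    omega

theorem card_edgeVerts_le_card_add_one {E : Finset (Sym2 α)} (hE : E.Nonempty)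
    (hgrow : ∀ S ⊂ E, S.Nonempty → ∃ g ∈ E \ S, ∃ v ∈ g, v ∈ edgeVerts S) :
    #(edgeVerts E) ≤ #E + 1 := by
  obtain ⟨e, he⟩ := hE
  have := card_edgeVerts_add_card_le_of_subset (singleton_subset_iff.mpr he)
    (singleton_nonempty e) hgrow
  have : #(edgeVerts {e}) ≤ 2 := by simpa [edgeVerts] using Sym2.card_toFinset_le_two e
  rw [card_singleton] at *
  omega

theorem two_mul_card_add_card_sdiff_le_sum_card {V : Finset α} {E T : Finset (Sym2 α)}
    (hET : E ⊆ T) (hE : ∀ e ∈ E, ¬e.IsDiag ∧ ∀ v ∈ e, v ∈ V)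
    (hT : ∀ e ∈ T, ∃ v ∈ e, v ∈ V) :
    2 * #E + #(T \ E) ≤ ∑ v ∈ V, #{e ∈ T | v ∈ e} := by
  have hEcount : ∀ e ∈ E, 2 ≤ #{v ∈ V | v ∈ e} := fun e he => by
    obtain ⟨hdiag, hsub⟩ := hE e he
    calc 2 = #e.toFinset := (Sym2.card_toFinset_of_not_isDiag e hdiag).symm
      _ ≤ #{v ∈ V | v ∈ e} := card_le_card fun v hv => by
        rw [Sym2.mem_toFinset] at hv
        exact mem_filter.mpr ⟨hsub v hv, hv⟩
  have hTcount : ∀ e ∈ T \ E, 1 ≤ #{v ∈ V | v ∈ e} := fun e he => by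
    obtain ⟨v, hve, hv⟩ := hT e (mem_sdiff.mp he).1
    exact card_pos.mpr ⟨v, mem_filter.mpr ⟨hv, hve⟩⟩
  calc 2 * #E + #(T \ E) = ∑ _e ∈ E, 2 + ∑ _e ∈ T \ E, 1 := by simp [mul_comm]
    _ ≤ ∑ e ∈ E, #{v ∈ V | v ∈ e} + ∑ e ∈ T \ E, #{v ∈ V | v ∈ e} := by
        gcongr with e he e he
        exacts [hEcount e he, hTcount e he]
    _ = ∑ e ∈ T, #{v ∈ V | v ∈ e} := by rw [add_comm, sum_sdiff hET]
    _ = ∑ v ∈ V, #{e ∈ T | v ∈ e} :=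
        (sum_card_bipartiteAbove_eq_sum_card_bipartiteBelow (fun v e => v ∈ e)).symm

end EdgeSets

def unitVecs : Finset (ℤ × ℤ) := {(1, 0), (-1, 0), (0, 1), (0, -1)}

def nbrEdges (v : ℤ × ℤ) : Finset (Sym2 (ℤ × ℤ)) := unitVecs.image fun d => s(v, v + d)

theorem abs_add_abs_eq_one_iff_sub_mem_unitVecs {x y : ℤ × ℤ} :
    |x.1 - y.1| + |x.2 - y.2| = 1 ↔ y - x ∈ unitVecs := by
  obtain ⟨a, b⟩ := x
  obtain ⟨c, d⟩ := y
  simp only [unitVecs, Finset.mem_insert, Finset.mem_singleton, Prod.mk_sub_mk, Prod.mk.injEq]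
  rcases abs_cases (a - c) with ⟨h1, _⟩ | ⟨h1, _⟩ <;>
    rcases abs_cases (b - d) with ⟨h2, _⟩ | ⟨h2, _⟩ <;> omega

theorem mem_nbrEdges {v : ℤ × ℤ} {e : Sym2 (ℤ × ℤ)} :
    e ∈ nbrEdges v ↔ IsNNEdge2 e ∧ v ∈ e := by
  constructor
  · rw [nbrEdges, mem_image]
    rintro ⟨d, hd, rfl⟩
    exact ⟨⟨v, v + d, rfl, abs_add_abs_eq_one_iff_sub_mem_unitVecs.mpr (by simpa)⟩,
      Sym2.mem_mk_left _ _⟩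
  · rintro ⟨⟨x, y, rfl, hxy⟩, hv⟩
    rcases Sym2.mem_iff.mp hv with rfl | rfl
    · exact mem_image.mpr ⟨y - v, abs_add_abs_eq_one_iff_sub_mem_unitVecs.mp hxy, by simp⟩
    · rw [abs_sub_comm x.1, abs_sub_comm x.2] at hxy
      exact mem_image.mpr
        ⟨x - v, abs_add_abs_eq_one_iff_sub_mem_unitVecs.mp hxy, by simp [Sym2.eq_swap]⟩

theorem card_nbrEdges_le (v : ℤ × ℤ) : #(nbrEdges v) ≤ 4 :=
  card_image_le.trans (by decide)

theorem IsNNEdge2.not_isDiag {e : Sym2 (ℤ × ℤ)} (h : IsNNEdge2 e) : ¬e.IsDiag := by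
  obtain ⟨x, y, rfl, hxy⟩ := h
  rintro (rfl : x = y)
  simp at hxy

theorem card_filter_mem_le_four {T : Finset (Sym2 (ℤ × ℤ))} (hT : ∀ e ∈ T, IsNNEdge2 e)
    (v : ℤ × ℤ) : #{e ∈ T | v ∈ e} ≤ 4 :=
  le_trans (card_le_card fun e he => by
    obtain ⟨heT, hve⟩ := mem_filter.mp he
    exact mem_nbrEdges.mpr ⟨hT e heT, hve⟩) (card_nbrEdges_le v)

theorem mem_biUnion_nbrEdges {V : Finset (ℤ × ℤ)} {e : Sym2 (ℤ × ℤ)} :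
    e ∈ V.biUnion nbrEdges ↔ IsNNEdge2 e ∧ ∃ v ∈ e, v ∈ V := by
  simp only [mem_biUnion, mem_nbrEdges]
  exact ⟨fun ⟨v, hv, hNN, hve⟩ => ⟨hNN, v, hve, hv⟩, fun ⟨hNN, v, hve, hv⟩ => ⟨v, hv, hNN, hve⟩⟩

theorem EdgeConnected2.exists_touching {E : Finset (Sym2 (ℤ × ℤ))} (hconn : EdgeConnected2 E) :
    ∀ S ⊂ E, S.Nonempty → ∃ g ∈ E \ S, ∃ v ∈ g, v ∈ edgeVerts S := by
  rintro S hSE ⟨e, he⟩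
  obtain ⟨f, hfE, hfS⟩ := exists_of_ssubset hSE
  obtain ⟨c, d, hc, hd, -, hdE, v, hvc, hvd⟩ :=
    (hconn e (hSE.subset he) f hfE).exists_rel_of_not (p := (· ∈ S)) he hfS
  exact ⟨d, mem_sdiff.mpr ⟨hdE, hd⟩, v, hvd, mem_edgeVerts.mpr ⟨c, hc, hvc⟩⟩

/-- Discrete isoperimetric inequality in `ℤ²`: for a configuration whose open edges form
a single nonempty finite connected component with `N` open edges, the number of closed
edges sharing a vertex with an open edge satisfies `∂N ≤ 2N + 4`. -/
theorem isoperimetric_Z2 (E : Finset (Sym2 (ℤ × ℤ)))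
    (hEdge : ∀ e ∈ E, IsNNEdge2 e)
    (hne : E.Nonempty)
    (hconn : EdgeConnected2 E) :
    {e : Sym2 (ℤ × ℤ) | IsNNEdge2 e ∧ e ∉ E ∧ ∃ f ∈ E, Touches2 e f}.ncard ≤
      2 * E.card + 4 := by
  set V := edgeVerts E
  set T := V.biUnion nbrEdges
  have hET : E ⊆ T := fun e he => by
    obtain ⟨x, y, rfl, -⟩ := hEdge e he
    exact mem_biUnion_nbrEdges.mpr
      ⟨hEdge _ he, x, Sym2.mem_mk_left x y, mem_edgeVerts.mpr ⟨_, he, Sym2.mem_mk_left x y⟩⟩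
  have hboundary : {e | IsNNEdge2 e ∧ e ∉ E ∧ ∃ f ∈ E, Touches2 e f} ⊆ ↑(T \ E) := by
    rintro e ⟨hNN, heE, f, hf, v, hve, hvf⟩
    exact mem_sdiff.mpr
      ⟨mem_biUnion_nbrEdges.mpr ⟨hNN, v, hve, mem_edgeVerts.mpr ⟨f, hf, hvf⟩⟩, heE⟩
  have hcount : 2 * #E + #(T \ E) ≤ 4 * #V := calc
    _ ≤ ∑ v ∈ V, #{e ∈ T | v ∈ e} := two_mul_card_add_card_sdiff_le_sum_card hET
          (fun e he => ⟨(hEdge e he).not_isDiag, fun v hv => mem_edgeVerts.mpr ⟨e, he, hv⟩⟩)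
          (fun e he => (mem_biUnion_nbrEdges.mp he).2)
    _ ≤ ∑ _v ∈ V, 4 := sum_le_sum fun v _ =>
          card_filter_mem_le_four (fun e he => (mem_biUnion_nbrEdges.mp he).1) v
    _ = 4 * #V := by rw [sum_const, smul_eq_mul, mul_comm]
  have hV : #V ≤ #E + 1 := card_edgeVerts_le_card_add_one hne hconn.exists_touching
  have hncard := Set.ncard_le_ncard hboundary (T \ E).finite_toSet
  rw [Set.ncard_coe_finset] at hncard
  omega
end

section
/- For any dimension d ≥ 2 and any finite nonempty connected set of open edges in Z^d with N open edges, the number ∂N of closed edges incident to the open edge set satisfies ∂N ≤ (2d-2)·N + 2d. -/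
/-!
Let `V` be the set of endpoints of the open edges `E`. Every closed edge incident to `E` and
every open edge is met at some vertex of `V`; summing the at most `2d` lattice edges at each
vertex of `V`, the open edges are counted twice, so `∂N + 2N ≤ 2d·|V|`. Connectivity gives a
spanning tree of the graph `(V, E)`, hence `|V| ≤ N + 1`, and `∂N ≤ 2d(N + 1) - 2N`.
-/

/-- A nearest-neighbour edge of `ℤ^d`: an unordered pair of vertices at `L¹`-distance 1. -/
def IsNNEdge (d : ℕ) (e : Sym2 (Fin d → ℤ)) : Prop :=
  ∃ x y : Fin d → ℤ, e = s(x, y) ∧ (∑ i, |x i - y i|) = 1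

/-- Two edges touch if they share a vertex. -/
def Touches {d : ℕ} (e f : Sym2 (Fin d → ℤ)) : Prop :=
  ∃ v : Fin d → ℤ, v ∈ e ∧ v ∈ f

/-- A finite set of edges is connected if any two of its edges are linked by a chain of
edges of the set, consecutive ones sharing a vertex. -/
def EdgeConnected {d : ℕ} (E : Finset (Sym2 (Fin d → ℤ))) : Prop :=
  ∀ e ∈ E, ∀ f ∈ E,
    Relation.ReflTransGen (fun a b => a ∈ E ∧ b ∈ E ∧ Touches a b) e f

open Finset SimpleGraph

section EdgeSets

variable {α : Type*} [DecidableEq α]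

def endpoints (E : Finset (Sym2 α)) : Finset α := E.biUnion Sym2.toFinset

@[simp]
theorem mem_endpoints {E : Finset (Sym2 α)} {v : α} : v ∈ endpoints E ↔ ∃ e ∈ E, v ∈ e := by
  simp [endpoints, Sym2.mem_toFinset]

theorem two_mul_card_le_sum_card_inter {E : Finset (Sym2 α)} (inc : α → Finset (Sym2 α))
    (hinc : ∀ e ∈ E, ∀ v ∈ e, e ∈ inc v) (hdiag : ∀ e ∈ E, ¬e.IsDiag) :
    2 * #E ≤ ∑ v ∈ endpoints E, #(inc v ∩ E) := by
  calc 2 * #E = ∑ e ∈ E, #e.toFinset := by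
        rw [mul_comm, ← smul_eq_mul, ← sum_const]
        exact sum_congr rfl fun e he => (Sym2.card_toFinset_of_not_isDiag e (hdiag e he)).symm
    _ ≤ ∑ e ∈ E, #((endpoints E).bipartiteBelow (fun v e => e ∈ inc v) e) := by
        refine sum_le_sum fun e he => card_le_card fun v hv => ?_
        rw [Sym2.mem_toFinset] at hv
        exact mem_filter.mpr ⟨mem_endpoints.mpr ⟨e, he, hv⟩, hinc e he v hv⟩
    _ = ∑ v ∈ endpoints E, #(inc v ∩ E) := by
        rw [← sum_card_bipartiteAbove_eq_sum_card_bipartiteBelow]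
        simp only [bipartiteAbove, filter_mem_eq_inter, inter_comm E]

theorem ncard_boundary_add_two_mul_card_le (P : Sym2 α → Prop) (inc : α → Finset (Sym2 α))
    {k : ℕ} (hinc : ∀ e, P e → ∀ v ∈ e, e ∈ inc v) (hk : ∀ v, #(inc v) ≤ k)
    {E : Finset (Sym2 α)} (hE : ∀ e ∈ E, P e) (hdiag : ∀ e ∈ E, ¬e.IsDiag) :
    {e | P e ∧ e ∉ E ∧ ∃ f ∈ E, ∃ v, v ∈ e ∧ v ∈ f}.ncard + 2 * #E ≤
      k * #(endpoints E) := by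
  have hboundary : {e | P e ∧ e ∉ E ∧ ∃ f ∈ E, ∃ v, v ∈ e ∧ v ∈ f} ⊆
      ↑((endpoints E).biUnion fun v => inc v \ E) := by
    rintro e ⟨he, heE, f, hf, v, hve, hvf⟩
    simp only [coe_biUnion, Set.mem_iUnion, mem_coe, mem_sdiff]
    exact ⟨v, mem_endpoints.mpr ⟨f, hf, hvf⟩, hinc e he v hve, heE⟩
  calc _ ≤ ∑ v ∈ endpoints E, #(inc v \ E) + ∑ v ∈ endpoints E, #(inc v ∩ E) := by
        gcongr
        · exact (Set.ncard_le_ncard hboundary (finite_toSet _)).trans_eq (Set.ncard_coe_finset _)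
            |>.trans card_biUnion_le
        · exact two_mul_card_le_sum_card_inter inc (fun e he => hinc e (hE e he)) hdiag
    _ = ∑ v ∈ endpoints E, #(inc v) := by
        rw [← sum_add_distrib]
        exact sum_congr rfl fun v _ => card_sdiff_add_card_inter _ _
    _ ≤ k * #(endpoints E) := by
        rw [mul_comm, ← smul_eq_mul, ← sum_const]
        exact sum_le_sum fun v _ => hk v

def endpointGraph (E : Finset (Sym2 α)) : SimpleGraph (endpoints E) :=
  (fromEdgeSet (E : Set (Sym2 α))).induce (endpoints E : Set α)

theorem endpointGraph_reachable {E : Finset (Sym2 α)} {e : Sym2 α} (he : e ∈ E)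
    {x y : α} (hx : x ∈ e) (hy : y ∈ e) :
    (endpointGraph E).Reachable ⟨x, mem_endpoints.mpr ⟨e, he, hx⟩⟩
      ⟨y, mem_endpoints.mpr ⟨e, he, hy⟩⟩ := by
  by_cases hxy : x = y
  · subst hxy; rfl
  · refine Adj.reachable ?_
    simp only [endpointGraph, comap_adj, Function.Embedding.subtype_apply, fromEdgeSet_adj,
      mem_coe, ne_eq, hxy, not_false_eq_true, and_true]
    rwa [← Sym2.mem_and_mem_iff hxy |>.mp ⟨hx, hy⟩]

theorem endpointGraph_preconnected {E : Finset (Sym2 α)}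
    (hconn : ∀ e ∈ E, ∀ f ∈ E,
      Relation.ReflTransGen (fun a b => a ∈ E ∧ b ∈ E ∧ ∃ v, v ∈ a ∧ v ∈ b) e f) :
    (endpointGraph E).Preconnected := by
  rintro ⟨x, hx⟩ ⟨y, hy⟩
  obtain ⟨e, he, hxe⟩ := mem_endpoints.mp hx
  obtain ⟨f, hf, hyf⟩ := mem_endpoints.mp hy
  suffices ∀ g, Relation.ReflTransGen (fun a b => a ∈ E ∧ b ∈ E ∧ ∃ v, v ∈ a ∧ v ∈ b) e g →
      ∀ (hg : g ∈ E) (z : α) (hz : z ∈ g),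
        (endpointGraph E).Reachable ⟨x, hx⟩ ⟨z, mem_endpoints.mpr ⟨g, hg, hz⟩⟩ from
    this f (hconn e he f hf) hf y hyf
  intro g hchain
  induction hchain with
  | refl => exact fun he z hz => endpointGraph_reachable he hxe hz
  | tail _ hstep ih =>
    obtain ⟨hb, -, v, hvb, hvc⟩ := hstep
    exact fun hc z hz => (ih hb v hvb).trans (endpointGraph_reachable hc hvc hz)

theorem card_edgeSet_endpointGraph_le (E : Finset (Sym2 α)) :
    Nat.card (endpointGraph E).edgeSet ≤ #E := by
  have hmaps : ∀ z ∈ (endpointGraph E).edgeSet, z.map Subtype.val ∈ E := by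
    rintro ⟨⟨x, _⟩, ⟨y, _⟩⟩ hz
    exact (by simpa [endpointGraph] using hz : _ ∧ _).1
  rw [← Nat.card_eq_finsetCard]
  exact Nat.card_le_card_of_injective (fun z => ⟨z.1.map Subtype.val, hmaps z.1 z.2⟩)
    fun z w h => Subtype.ext (Sym2.map.injective Subtype.val_injective (congrArg Subtype.val h))

theorem card_endpoints_le_card_add_one {E : Finset (Sym2 α)}
    (hconn : ∀ e ∈ E, ∀ f ∈ E,
      Relation.ReflTransGen (fun a b => a ∈ E ∧ b ∈ E ∧ ∃ v, v ∈ a ∧ v ∈ b) e f) :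
    #(endpoints E) ≤ #E + 1 := by
  rcases (endpoints E).eq_empty_or_nonempty with hV | hV
  · simp [hV]
  have := hV.to_subtype
  have hG : (endpointGraph E).Connected := ⟨endpointGraph_preconnected hconn⟩
  calc #(endpoints E) = Nat.card (endpoints E) := (Nat.card_eq_finsetCard _).symm
    _ ≤ Nat.card (endpointGraph E).edgeSet + 1 := hG.card_vert_le_card_edgeSet_add_one
    _ ≤ #E + 1 := by gcongr; exact card_edgeSet_endpointGraph_le E

end EdgeSets

theorem exists_eq_add_single_of_sum_abs_sub_eq_one {ι : Type*} [Fintype ι] [DecidableEq ι]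
    {x y : ι → ℤ} (h : ∑ i, |x i - y i| = 1) :
    ∃ i, ∃ s ∈ ({1, -1} : Finset ℤ), y = x + Pi.single i s := by
  obtain ⟨i, -, hi⟩ : ∃ i ∈ univ, |x i - y i| ≠ 0 :=
    exists_ne_zero_of_sum_ne_zero (h.symm ▸ one_ne_zero)
  have hsplit := add_sum_erase univ (fun j => |x j - y j|) (mem_univ i)
  have hrest : ∑ j ∈ univ.erase i, |x j - y j| = 0 := by
    have := sum_nonneg fun j (_ : j ∈ univ.erase i) => abs_nonneg (x j - y j)
    have := abs_pos.mpr (abs_ne_zero.mp hi)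
    omega
  have hoff : ∀ j ≠ i, y j = x j := fun j hj => by
    have := (sum_eq_zero_iff_of_nonneg fun j _ => abs_nonneg _).mp hrest j (by simpa using hj)
    linarith [abs_eq_zero.mp this]
  refine ⟨i, y i - x i, ?_, funext fun j => ?_⟩
  · have hi1 : |x i - y i| = 1 := by omega
    simp only [mem_insert, mem_singleton]
    rcases abs_eq zero_le_one |>.mp hi1 with h1 | h1 <;> omega
  · rcases eq_or_ne j i with rfl | hj
    · simp
    · simp [hj, hoff j hj]

def latticeEdgesAt {d : ℕ} (v : Fin d → ℤ) : Finset (Sym2 (Fin d → ℤ)) :=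
  (univ ×ˢ {1, -1}).image fun p : Fin d × ℤ => s(v, v + Pi.single p.1 p.2)

theorem card_latticeEdgesAt_le {d : ℕ} (v : Fin d → ℤ) : #(latticeEdgesAt v) ≤ 2 * d := by
  refine card_image_le.trans ?_
  simp [mul_comm]

theorem IsNNEdge.mem_latticeEdgesAt {d : ℕ} {e : Sym2 (Fin d → ℤ)} (he : IsNNEdge d e)
    {v : Fin d → ℤ} (hv : v ∈ e) : e ∈ latticeEdgesAt v := by
  obtain ⟨x, y, rfl, hxy⟩ := he
  have key : ∀ {x y : Fin d → ℤ}, ∑ i, |x i - y i| = 1 → s(x, y) ∈ latticeEdgesAt x :=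
    fun h => by
      obtain ⟨i, s, hs, rfl⟩ := exists_eq_add_single_of_sum_abs_sub_eq_one h
      exact mem_image.mpr ⟨(i, s), mem_product.mpr ⟨mem_univ i, hs⟩, rfl⟩
  rcases Sym2.mem_iff.mp hv with rfl | rfl
  · exact key hxy
  · rw [Sym2.eq_swap]
    exact key (by simpa only [abs_sub_comm] using hxy)

theorem IsNNEdge.not_isDiag {d : ℕ} {e : Sym2 (Fin d → ℤ)} (he : IsNNEdge d e) :
    ¬e.IsDiag := by
  obtain ⟨x, y, rfl, hxy⟩ := he
  rw [Sym2.mk_isDiag_iff]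
  rintro rfl
  simp at hxy

theorem isoperimetric_Zd_general (d : ℕ)
    (E : Finset (Sym2 (Fin d → ℤ)))
    (hEdge : ∀ e ∈ E, IsNNEdge d e)
    (hconn : EdgeConnected E) :
    {e : Sym2 (Fin d → ℤ) | IsNNEdge d e ∧ e ∉ E ∧ ∃ f ∈ E, Touches e f}.ncard ≤
      (2 * d - 2) * E.card + 2 * d := by
  set B := {e : Sym2 (Fin d → ℤ) | IsNNEdge d e ∧ e ∉ E ∧ ∃ f ∈ E, Touches e f}.ncard
  have hcount : B + 2 * #E ≤ 2 * d * #(endpoints E) :=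
    ncard_boundary_add_two_mul_card_le (IsNNEdge d) latticeEdgesAt
      (fun _ he _ hv => he.mem_latticeEdgesAt hv) card_latticeEdgesAt_le hEdge
      fun e he => (hEdge e he).not_isDiag
  have hverts : #(endpoints E) ≤ #E + 1 := card_endpoints_le_card_add_one hconn
  have hmain : B + 2 * #E ≤ 2 * d * #E + 2 * d :=
    hcount.trans (by simpa only [mul_add, mul_one] using Nat.mul_le_mul_left (2 * d) hverts)
  rw [Nat.sub_mul]
  omega

/-- Discrete isoperimetric inequality in `ℤ^d`: for a finite nonempty connected set of
open nearest-neighbour edges with `N` edges, the number of closed edges incident to it is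
at most `(2d-2)·N + 2d`. -/
theorem isoperimetric_Zd (d : ℕ) (hd : 2 ≤ d)
    (E : Finset (Sym2 (Fin d → ℤ)))
    (hEdge : ∀ e ∈ E, IsNNEdge d e)
    (hne : E.Nonempty)
    (hconn : EdgeConnected E) :
    {e : Sym2 (Fin d → ℤ) | IsNNEdge d e ∧ e ∉ E ∧ ∃ f ∈ E, Touches e f}.ncard ≤
      (2 * d - 2) * E.card + 2 * d :=
  isoperimetric_Zd_general d E hEdge hconn
end
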